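/- Let H be a Hilbert space, let S be a bounded self-adjoint operator on H, and let X ⊂ H be a dense linear subspace with S(X) ⊂ X. Suppose ‖·‖_X is a norm on X such that (X, ‖·‖_X) is complete and continuously embedded in H. Then: (i) the restriction A := S|_X is a bounded operator on (X, ‖·‖_X); and (ii) if in addition the approximate point spectrum of A satisfies σ_ap(A) ⊂ σ(S), then σ(A) = σ(S). -/

import Mathlib

/-!
Part (i) is the closed graph theorem: if `x n → x` in `X` and `A (x n) → y`, then applying the
continuous maps `ι` and `S` gives `ι y = S (ι x) = ι (A x)`.

For `σ(A) ⊆ σ(S)`: boundary points of a spectrum are approximate eigenvalues, so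
`∂σ(A) ⊆ σ_ap(A) ⊆ σ(S) ⊆ ℝ`. A compact set with real boundary has empty interior (a vertical ray
from one of its points cannot cross the boundary, so it leaves the set at once), hence
`σ(A) = ∂σ(A) ⊆ σ(S)`.

For `σ(S) ⊆ σ(A)`: suppose `z₀ ∈ σ(S) ∖ σ(A)`. Choose a continuous bump `θ` at `z₀` and a
continuous `φ` which is the identity on the support of `θ` and maps into a small disc around `z₀`,
so that `σ(φ(S))` lies in `ρ(A)`. Then `θ(S) R_{φ(S)}(w) (w - S) = θ(S)`, so for `x ∈ X` the maps
`w ↦ θ(S) ι (R_A(w) x)` on `ρ(A)` and `w ↦ θ(S) R_{φ(S)}(w) (ι x)` on `ρ(φ(S))` agree on the overlap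
and glue to an entire function vanishing at infinity. By Liouville `θ(S) ∘ ι = 0`, so `θ(S) = 0`
by density, contradicting `1 = θ(z₀) ∈ σ(θ(S))`.
-/

open Filter

noncomputable section

/-- The approximate point spectrum of a bounded operator `T` on a Banach space `X`:
those `z ∈ ℂ` for which there is a sequence of unit vectors `u n` with
`‖(T - z) u n‖ → 0`. -/
def approxPtSpectrum {X : Type*} [NormedAddCommGroup X] [NormedSpace ℂ X]
    (T : X →L[ℂ] X) : Set ℂ :=
  { z : ℂ | ∃ u : ℕ → X, (∀ n, ‖u n‖ = 1) ∧
      Tendsto (fun n => ‖T (u n) - z • u n‖) atTop (nhds 0) }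

open Metric Topology

theorem exists_continuousLinearMap_intertwining {𝕜 X Y : Type*} [NontriviallyNormedField 𝕜]
    [NormedAddCommGroup X] [NormedSpace 𝕜 X] [CompleteSpace X]
    [NormedAddCommGroup Y] [NormedSpace 𝕜 Y]
    {ι : X →L[𝕜] Y} (hinj : Function.Injective ι) {S : Y →L[𝕜] Y}
    (hS : ∀ x, S (ι x) ∈ Set.range ι) :
    ∃ A : X →L[𝕜] X, ∀ x, ι (A x) = S (ι x) := by
  let e := LinearEquiv.ofInjective ι.toLinearMap hinj
  have hS' : ∀ y ∈ LinearMap.range ι.toLinearMap, S y ∈ LinearMap.range ι.toLinearMap := by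
    rintro _ ⟨x, rfl⟩
    exact hS x
  let g : X →ₗ[𝕜] X := e.symm.toLinearMap ∘ₗ S.toLinearMap.restrict hS' ∘ₗ e.toLinearMap
  have hg : ∀ x, ι (g x) = S (ι x) := fun x => LinearEquiv.ofInjective_symm_apply (h := hinj)
    (x := ⟨S (ι x), hS' _ (LinearMap.mem_range_self _ x)⟩)
  refine ⟨.ofSeqClosedGraph (g := g) fun u x y hu hgu => hinj ?_, hg⟩
  rw [hg]
  refine tendsto_nhds_unique ((ι.continuous.tendsto y).comp hgu) ?_
  simpa only [Function.comp_def, hg] using ((S.continuous.comp ι.continuous).tendsto x).comp hu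

theorem spectrum.inv_norm_resolvent_le {𝕜 A : Type*} [NontriviallyNormedField 𝕜] [NormedRing A]
    [NormedAlgebra 𝕜 A] [CompleteSpace A] [NormOneClass A] {a : A} {w z : 𝕜}
    (hw : w ∈ resolventSet 𝕜 a) (hz : z ∈ spectrum 𝕜 a) : ‖resolvent a w‖⁻¹ ≤ ‖z - w‖ := by
  by_contra! h
  have hw' : IsUnit (algebraMap 𝕜 A w - a) := hw
  refine hz (Units.ofNearby hw'.unit _ ?_).isUnit
  rwa [hw'.unit_spec, sub_sub_sub_cancel_right, ← map_sub, norm_algebraMap', ← Ring.inverse_unit,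
    hw'.unit_spec]

section ApproxPtSpectrum

variable {X : Type*} [NormedAddCommGroup X] [NormedSpace ℂ X]

theorem mem_approxPtSpectrum_of_forall_exists {T : X →L[ℂ] X} {z : ℂ}
    (h : ∀ ε > 0, ∃ u : X, ‖u‖ = 1 ∧ ‖T u - z • u‖ < ε) : z ∈ approxPtSpectrum T := by
  choose u hu hTu using fun n : ℕ => h (1 / (n + 1)) Nat.one_div_pos_of_nat
  exact ⟨u, hu, squeeze_zero (fun _ => norm_nonneg _) (fun n => (hTu n).le)
    tendsto_one_div_add_atTop_nhds_zero_nat⟩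

theorem exists_norm_eq_one_norm_apply_le_of_mul_eq_one [Nontrivial X] {U R : X →L[ℂ] X}
    (hUR : U * R = 1) : ∃ u : X, ‖u‖ = 1 ∧ ‖U u‖ ≤ 2 * ‖R‖⁻¹ := by
  have hR : 0 < ‖R‖ := norm_pos_iff.mpr (right_ne_zero_of_mul_eq_one hUR)
  obtain ⟨v, hv, hRv⟩ := R.exists_lt_apply_of_lt_opNorm (half_lt_self hR)
  have hRv₀ : 0 < ‖R v‖ := (half_pos hR).trans hRv
  have hURv : U (R v) = v := by rw [← mul_apply_eq_comp, hUR, one_apply_eq_self]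
  refine ⟨(‖R v‖⁻¹ : ℂ) • R v, ?_, ?_⟩
  · rw [norm_smul, norm_inv, Complex.norm_real, Real.norm_of_nonneg hRv₀.le,
      inv_mul_cancel₀ hRv₀.ne']
  · rw [map_smul, hURv, norm_smul, norm_inv, Complex.norm_real, Real.norm_of_nonneg hRv₀.le]
    calc ‖R v‖⁻¹ * ‖v‖ ≤ (‖R‖ / 2)⁻¹ * 1 := by gcongr
      _ = 2 * ‖R‖⁻¹ := by ring

theorem frontier_spectrum_subset_approxPtSpectrum [CompleteSpace X] (T : X →L[ℂ] X) :
    frontier (spectrum ℂ T) ⊆ approxPtSpectrum T := by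
  intro z hz
  have hzT : z ∈ spectrum ℂ T := (spectrum.isClosed T).frontier_subset hz
  have : Nontrivial X := by
    by_contra hX
    rw [not_nontrivial_iff_subsingleton] at hX
    simp [spectrum.of_subsingleton] at hzT
  refine mem_approxPtSpectrum_of_forall_exists fun ε hε => ?_
  have hz' : z ∈ closure (spectrum ℂ T)ᶜ :=
    (frontier_eq_closure_inter_closure (s := spectrum ℂ T) ▸ hz).2
  obtain ⟨w, hw, hzw⟩ := mem_closure_iff.mp hz' (ε / 3) (by positivity)
  rw [Set.mem_compl_iff, spectrum.notMem_iff] at hw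
  rw [dist_eq_norm] at hzw
  have hR := spectrum.inv_norm_resolvent_le hw hzT
  obtain ⟨u, hu, hUu⟩ :=
    exists_norm_eq_one_norm_apply_le_of_mul_eq_one (Ring.mul_inverse_cancel _ hw)
  refine ⟨u, hu, ?_⟩
  have hTu : T u - z • u = (w - z) • u - (algebraMap ℂ (X →L[ℂ] X) w - T) u := by
    simp only [sub_apply, Algebra.algebraMap_eq_smul_one, smul_apply, one_apply_eq_self]
    module
  calc ‖T u - z • u‖ ≤ ‖w - z‖ + 2 * ‖resolvent T w‖⁻¹ := by
        rw [hTu]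
        refine (norm_sub_le _ _).trans (add_le_add ?_ hUu)
        rw [norm_smul, hu, mul_one]
    _ ≤ 3 * ‖z - w‖ := by rw [norm_sub_rev]; linarith
    _ < ε := by linarith

end ApproxPtSpectrum

theorem mem_frontier_of_forall_add_smul_notMem_frontier {E : Type*} [NormedAddCommGroup E]
    [NormedSpace ℝ E] {K : Set E} (hK : IsClosed K) (hKb : Bornology.IsBounded K) {z v : E}
    (hz : z ∈ K) (hv : v ≠ 0) (hray : ∀ t : ℝ, 0 < t → z + t • v ∉ frontier K) :
    z ∈ frontier K := by
  set ray := (fun t : ℝ => z + t • v) '' Set.Ioi 0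
  have hcont : Continuous fun t : ℝ => z + t • v := by fun_prop
  have hsub : ray ⊆ interior K ∪ Kᶜ := by
    rintro _ ⟨t, ht, rfl⟩
    by_cases hK' : z + t • v ∈ K
    · exact .inl (by_contra fun h => hray t ht (hK.frontier_eq ▸ ⟨hK', h⟩))
    · exact .inr hK'
  rcases (isPreconnected_Ioi.image _ hcont.continuousOn).subset_or_subset isOpen_interior
    hK.isOpen_compl (disjoint_compl_right.mono_left interior_subset) hsub with h | h
  · obtain ⟨r, hr, hKr⟩ := hKb.subset_ball_lt 0 z
    have hrv : 0 < r / ‖v‖ := div_pos hr (norm_pos_iff.mpr hv)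
    have hmem : z + (r / ‖v‖) • v ∈ ball z r := hKr (interior_subset (h ⟨_, hrv, rfl⟩))
    rw [mem_ball, dist_eq_norm, add_sub_cancel_left, norm_smul, Real.norm_of_nonneg hrv.le,
      div_mul_cancel₀ _ (norm_ne_zero_iff.mpr hv)] at hmem
    exact (lt_irrefl r hmem).elim
  · have hlim : Tendsto (fun t : ℝ => z + t • v) (𝓝[>] 0) (𝓝 z) := by
      simpa using (hcont.tendsto 0).mono_left nhdsWithin_le_nhds
    rw [frontier_eq_closure_inter_closure, hK.closure_eq]
    exact ⟨hz, closure_mono h (mem_closure_of_tendsto hlim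
      (eventually_mem_nhdsWithin.mono fun t ht => ⟨t, ht, rfl⟩))⟩

theorem subset_frontier_of_forall_mem_frontier_im_eq_zero {K : Set ℂ} (hK : IsClosed K)
    (hKb : Bornology.IsBounded K) (h : ∀ z ∈ frontier K, z.im = 0) : K ⊆ frontier K := by
  intro z hz
  obtain ⟨v, hv, hvim⟩ : ∃ v : ℂ, v ≠ 0 ∧ ∀ t : ℝ, 0 < t → (z + t • v).im ≠ 0 := by
    rcases le_total 0 z.im with him | him
    · refine ⟨Complex.I, Complex.I_ne_zero, fun t ht => ?_⟩
      rw [Complex.add_im, Complex.smul_im, Complex.I_im, smul_eq_mul, mul_one]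
      exact (by linarith : 0 < z.im + t).ne'
    · refine ⟨-Complex.I, neg_ne_zero.mpr Complex.I_ne_zero, fun t ht => ?_⟩
      rw [Complex.add_im, Complex.smul_im, Complex.neg_im, Complex.I_im, smul_eq_mul, mul_neg_one]
      exact (by linarith : z.im + -t < 0).ne
  exact mem_frontier_of_forall_add_smul_notMem_frontier hK hKb hz hv
    fun t ht hfr => hvim t ht (h _ hfr)

theorem spectrum_subset_of_approxPtSpectrum_subset {X : Type*} [NormedAddCommGroup X]
    [NormedSpace ℂ X] [CompleteSpace X] {𝒜 : Type*} [CStarAlgebra 𝒜] {S : 𝒜}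
    (hS : IsSelfAdjoint S) {A : X →L[ℂ] X} (hA : approxPtSpectrum A ⊆ spectrum ℂ S) :
    spectrum ℂ A ⊆ spectrum ℂ S := by
  have hfr := (frontier_spectrum_subset_approxPtSpectrum A).trans hA
  exact (subset_frontier_of_forall_mem_frontier_im_eq_zero (spectrum.isClosed A)
    (spectrum.isBounded A) fun z hz => hS.im_eq_zero_of_mem_spectrum (hfr hz)).trans hfr

theorem exists_differentiable_eqOn_of_eqOn_inter {𝕜 E F : Type*} [NontriviallyNormedField 𝕜]
    [NormedAddCommGroup E] [NormedSpace 𝕜 E] [NormedAddCommGroup F] [NormedSpace 𝕜 F]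
    {U V : Set E} (hU : IsOpen U) (hV : IsOpen V) (hUV : U ∪ V = Set.univ) {f g : E → F}
    (hf : DifferentiableOn 𝕜 f U) (hg : DifferentiableOn 𝕜 g V) (hfg : Set.EqOn f g (U ∩ V)) :
    ∃ F : E → F, Differentiable 𝕜 F ∧ Set.EqOn F f U ∧ Set.EqOn F g V := by
  classical
  have hFU : Set.EqOn (U.piecewise f g) f U := fun x hx => U.piecewise_eq_of_mem f g hx
  have hFV : Set.EqOn (U.piecewise f g) g V := fun x hx => by
    by_cases hxU : x ∈ U
    · rw [U.piecewise_eq_of_mem f g hxU, hfg ⟨hxU, hx⟩]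
    · exact U.piecewise_eq_of_notMem f g hxU
  refine ⟨U.piecewise f g, fun x => ?_, hFU, hFV⟩
  by_cases hxU : x ∈ U
  · exact (hf.differentiableAt (hU.mem_nhds hxU)).congr_of_eventuallyEq
      (Filter.eventually_of_mem (hU.mem_nhds hxU) hFU)
  · have hxV : x ∈ V := (hUV ▸ Set.mem_univ x).resolve_left hxU
    exact (hg.differentiableAt (hV.mem_nhds hxV)).congr_of_eventuallyEq
      (Filter.eventually_of_mem (hV.mem_nhds hxV) hFV)

theorem differentiableOn_resolvent_apply {𝕜 E : Type*} [NontriviallyNormedField 𝕜]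
    [NormedAddCommGroup E] [NormedSpace 𝕜 E] [CompleteSpace E] (T : E →L[𝕜] E) (v : E) :
    DifferentiableOn 𝕜 (fun w => resolvent T w v) (resolventSet 𝕜 T) := fun _ hw =>
  (spectrum.hasDerivAt_resolvent_const_left hw).differentiableAt.clm_apply
    (differentiableAt_const v) |>.differentiableWithinAt

theorem sub_apply_resolvent_of_intertwining {𝕜 X Y : Type*} [NontriviallyNormedField 𝕜]
    [NormedAddCommGroup X] [NormedSpace 𝕜 X] [NormedAddCommGroup Y] [NormedSpace 𝕜 Y]
    {ι : X →L[𝕜] Y} {S : Y →L[𝕜] Y} {A : X →L[𝕜] X} (hA : ∀ x, ι (A x) = S (ι x))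
    {w : 𝕜} (hw : w ∈ resolventSet 𝕜 A) (x : X) :
    (algebraMap 𝕜 _ w - S) (ι (resolvent A w x)) = ι x := by
  have hx : (algebraMap 𝕜 _ w - A) (resolvent A w x) = x := by
    rw [← mul_apply_eq_comp, resolvent, Ring.mul_inverse_cancel _ hw, one_apply_eq_self]
  conv_rhs => rw [← hx]
  simp [Algebra.algebraMap_eq_smul_one, hA]

theorem apply_eq_zero_of_mul_resolvent_mul_sub_eq {X H : Type*}
    [NormedAddCommGroup X] [NormedSpace ℂ X] [CompleteSpace X]
    [NormedAddCommGroup H] [NormedSpace ℂ H] [CompleteSpace H]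
    {ι : X →L[ℂ] H} {S T P : H →L[ℂ] H} {A : X →L[ℂ] X} (hA : ∀ x, ι (A x) = S (ι x))
    (hTA : spectrum ℂ T ⊆ resolventSet ℂ A)
    (hPT : ∀ w ∈ resolventSet ℂ T, P * resolvent T w * (algebraMap ℂ _ w - S) = P) (x : X) :
    P (ι x) = 0 := by
  obtain ⟨w, hw⟩ := Filter.nonempty_of_mem (spectrum.isBounded (𝕜 := ℂ) A)
  replace hw : w ∈ resolventSet ℂ A := not_not.mp hw
  have hx : resolvent A w ((algebraMap ℂ _ w - A) x) = x := by
    rw [← mul_apply_eq_comp, resolvent, Ring.inverse_mul_cancel _ hw, one_apply_eq_self]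
  set y := (algebraMap ℂ _ w - A) x
  have hcover : resolventSet ℂ A ∪ resolventSet ℂ T = Set.univ :=
    Set.eq_univ_of_forall fun w' =>
      or_iff_not_imp_left.mpr fun hA' => not_not.mp fun hT' => hA' (hTA hT')
  have hagree : Set.EqOn (fun w' => P (ι (resolvent A w' y))) (fun w' => P (resolvent T w' (ι y)))
      (resolventSet ℂ A ∩ resolventSet ℂ T) := fun w' ⟨hwA, hwT⟩ => by
    dsimp only
    conv_lhs => rw [← hPT w' hwT]
    conv_rhs => rw [← sub_apply_resolvent_of_intertwining hA hwA y]
    rfl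
  obtain ⟨F, hF, hFA, hFT⟩ := exists_differentiable_eqOn_of_eqOn_inter
    (spectrum.isOpen_resolventSet A) (spectrum.isOpen_resolventSet T) hcover
    ((P.comp ι).differentiable.comp_differentiableOn (differentiableOn_resolvent_apply A y))
    (P.differentiable.comp_differentiableOn (differentiableOn_resolvent_apply T (ι y))) hagree
  have hFlim : Tendsto F (cocompact ℂ) (𝓝 0) := by
    rw [← cobounded_eq_cocompact]
    have hlim := ((P.comp (ContinuousLinearMap.apply ℂ H (ι y))).continuous.tendsto 0).comp
      (spectrum.resolvent_tendsto_cobounded (𝕜 := ℂ) T)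
    rw [map_zero] at hlim
    exact hlim.congr' (Filter.mem_of_superset (spectrum.isBounded T)
      fun w' hw' => (hFT (not_not.mp hw')).symm)
  rw [← hx]
  exact (hFA hw).symm.trans (hF.apply_eq_of_tendsto_cocompact w hFlim)

theorem cfc_mul_resolvent_cfc_mul_sub {𝒜 : Type*} [CStarAlgebra 𝒜] (a : 𝒜) [IsStarNormal a]
    {θ φ : ℂ → ℂ} (hθ : Continuous θ) (hφ : Continuous φ) (hθφ : ∀ t, θ t ≠ 0 → φ t = t)
    {w : ℂ} (hw : w ∈ resolventSet ℂ (cfc φ a)) :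
    cfc θ a * resolvent (cfc φ a) w * (algebraMap ℂ 𝒜 w - a) = cfc θ a := by
  have hwφ : ∀ t ∈ spectrum ℂ a, w - φ t ≠ 0 := fun t ht h =>
    (show w ∈ spectrum ℂ (cfc φ a) by
      rw [cfc_map_spectrum φ a]; exact ⟨t, ht, (sub_eq_zero.mp h).symm⟩) hw
  have hres : resolvent (cfc φ a) w = cfc (fun t => (w - φ t)⁻¹) a := by
    rw [cfc_inv _ a hwφ, cfc_sub (fun _ => w) φ a, cfc_const w a, resolvent]
  have hsub : algebraMap ℂ 𝒜 w - a = cfc (fun t => w - t) a := by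
    rw [cfc_sub (fun _ => w) (fun t => t) a, cfc_const w a, cfc_id' ℂ a]
  have hcont : ContinuousOn (fun t => (w - φ t)⁻¹) (spectrum ℂ a) :=
    (continuousOn_const.sub hφ.continuousOn).inv₀ hwφ
  rw [hres, hsub, ← cfc_mul θ _ a hθ.continuousOn hcont,
    ← cfc_mul (fun t => θ t * (w - φ t)⁻¹) (fun t => w - t) a (hθ.continuousOn.mul hcont)]
  refine cfc_congr fun t ht => ?_
  by_cases hθt : θ t = 0
  · simp [hθt]
  · have hwt := hwφ t ht
    rw [hθφ t hθt] at hwt ⊢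
    field_simp

theorem spectrum_subset_spectrum_of_intertwining {X H : Type*}
    [NormedAddCommGroup X] [NormedSpace ℂ X] [CompleteSpace X]
    [NormedAddCommGroup H] [InnerProductSpace ℂ H] [CompleteSpace H]
    {ι : X →L[ℂ] H} (hdense : DenseRange ι) {S : H →L[ℂ] H} [IsStarNormal S] {A : X →L[ℂ] X}
    (hA : ∀ x, ι (A x) = S (ι x)) :
    spectrum ℂ S ⊆ spectrum ℂ A := by
  intro z₀ hz₀ hz₀A
  obtain ⟨ε, hε, hball⟩ := isOpen_iff.mp (spectrum.isOpen_resolventSet A) z₀ hz₀A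
  let b₁ : ContDiffBump z₀ := ⟨ε / 4, ε / 2, by positivity, by linarith⟩
  let b₂ : ContDiffBump z₀ := ⟨ε / 2, ε, by positivity, by linarith⟩
  let θ : ℂ → ℂ := fun t => (b₁ t : ℂ)
  let φ : ℂ → ℂ := fun t => z₀ + (b₂ t : ℂ) * (t - z₀)
  have hθ : Continuous θ := Complex.continuous_ofReal.comp b₁.continuous
  have hφ : Continuous φ := continuous_const.add
    ((Complex.continuous_ofReal.comp b₂.continuous).mul (continuous_id.sub continuous_const))
  have hθφ : ∀ t, θ t ≠ 0 → φ t = t := fun t ht => by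
    have ht' : t ∈ ball z₀ (ε / 2) := b₁.support_eq ▸ Complex.ofReal_ne_zero.mp ht
    simp [φ, b₂.one_of_mem_closedBall (ball_subset_closedBall ht')]
  have hφA : spectrum ℂ (cfc φ S) ⊆ resolventSet ℂ A := by
    rw [cfc_map_spectrum φ S]
    rintro _ ⟨t, -, rfl⟩
    refine hball ?_
    rw [mem_ball, dist_eq_norm, add_sub_cancel_left, norm_mul, Complex.norm_real,
      Real.norm_of_nonneg b₂.nonneg]
    by_cases ht : b₂ t = 0
    · rwa [ht, zero_mul]
    · have ht' : t ∈ ball z₀ ε := b₂.support_eq ▸ ht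
      rw [mem_ball, dist_eq_norm] at ht'
      exact (mul_le_of_le_one_left (norm_nonneg _) b₂.le_one).trans_lt ht'
  have hθS : cfc θ S = 0 := by
    have hθι := apply_eq_zero_of_mul_resolvent_mul_sub_eq hA hφA
      fun w hw => cfc_mul_resolvent_cfc_mul_sub S hθ hφ hθφ hw
    exact ContinuousLinearMap.ext <| congrFun <|
      hdense.equalizer (cfc θ S).continuous continuous_const (funext hθι)
  have h1 : (1 : ℂ) ∈ spectrum ℂ (cfc θ S) := by
    rw [cfc_map_spectrum θ S]
    exact ⟨z₀, hz₀, by simp [θ, b₁.one_of_mem_closedBall (mem_closedBall_self b₁.rIn_pos.le)]⟩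
  simp [hθS, spectrum.mem_iff] at h1

/-- Let `H` be a Hilbert space, `S` a bounded self-adjoint operator on `H`,
and let `X ↪ H` be continuously and densely embedded Banach space (embedding `ι`) with
`S (ran ι) ⊆ ran ι`. Then (i) the restriction of `S` to `X` is a bounded operator `A` on `X`;
and (ii) if moreover `σ_ap(A) ⊆ σ(S)`, then `σ(A) = σ(S)`. -/
theorem spectrum_of_restriction_of_selfadjoint
    {H : Type*} [NormedAddCommGroup H] [InnerProductSpace ℂ H] [CompleteSpace H]
    {X : Type*} [NormedAddCommGroup X] [NormedSpace ℂ X] [CompleteSpace X]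
    -- the (continuous, injective, densely ranged) embedding X ↪ H
    (ι : X →L[ℂ] H) (hinj : Function.Injective ι) (hdense : DenseRange ι)
    (S : H →L[ℂ] H) (hS : IsSelfAdjoint S)
    (hSX : ∀ x : X, S (ι x) ∈ Set.range ι) :
    -- (i) the restriction A = S|_X is a bounded operator on X
    (∃ A : X →L[ℂ] X, ∀ x : X, ι (A x) = S (ι x)) ∧
    -- (ii) if σ_ap(A) ⊆ σ(S), then σ(A) = σ(S)
    (∀ A : X →L[ℂ] X, (∀ x : X, ι (A x) = S (ι x)) →
      approxPtSpectrum A ⊆ spectrum ℂ S → spectrum ℂ A = spectrum ℂ S) := by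
  refine ⟨exists_continuousLinearMap_intertwining hinj hSX, fun A hA hap => ?_⟩
  have := hS.isStarNormal
  exact (spectrum_subset_of_approxPtSpectrum_subset hS hap).antisymm
    (spectrum_subset_spectrum_of_intertwining hdense hA)
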